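/- For every n ≥ 4, the prefix of the golden string S of length F_n − 2 equals the substring of S occupying positions 2F_{n+1} + 1 through F_{n+3} − 2 (inclusive). -/

import Mathlib

/-!
Write `S_n` for `gs n`, so that `|S_n| = F (n + 1)`. For `n ≥ 4`,
`S_(n+2) = S_(n+1) S_(n-2) S_(n-3) S_(n-2)` and `|S_(n+1) S_(n-2)| = 2 F (n + 1)`, so the letters
of `S` from position `2 F (n + 1) + 1` on spell `S_(n-3) S_(n-2)`. This word agrees with
`S_(n-1) = S_(n-2) S_(n-3)`, a prefix of `S` of length `F n`, except that their last two letters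
are swapped.
-/

/-- The finite golden strings: `gs 1 = [B]`, `gs 2 = [B, A]`, `gs n = gs (n-1) ++ gs (n-2)`.
Here `true` denotes the letter B and `false` denotes the letter A. -/
def gs : ℕ → List Bool
  | 0 => []
  | 1 => [true]
  | 2 => [true, false]
  | (n+3) => gs (n+2) ++ gs (n+1)

/-- The `i`-th letter (1-indexed) of the infinite golden string `S`;
`true` = B, `false` = A.  Since `gs n` is a prefix of `gs (n+1)` and
`(gs (i+1)).length = F (i+2) ≥ i`, this is well-defined. -/
def goldenLetter (i : ℕ) : Bool := (gs (i+1)).getD (i-1) true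

/-- `s` is the (index set of the) Zeckendorf decomposition of `n`:
a set of indices `≥ 2`, no two adjacent, with `n = ∑_{i ∈ s} F i`. -/
def IsZeck (n : ℕ) (s : Finset ℕ) : Prop :=
  (∀ i ∈ s, 2 ≤ i) ∧ (∀ i ∈ s, i + 1 ∉ s) ∧ n = ∑ i ∈ s, Nat.fib i

/-- `c` is the coefficient function of the Chung–Graham decomposition of `n`:
`n = ∑_{i ≥ 1} c i * F (2i)` with `c i ∈ {0,1,2}` and a coefficient `0`
strictly between any two coefficients equal to `2`. -/
def IsCG (n : ℕ) (c : ℕ →₀ ℕ) : Prop :=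
  (∀ i, c i ≤ 2) ∧ c 0 = 0 ∧
  (∀ i₁ i₂, i₁ < i₂ → c i₁ = 2 → c i₂ = 2 → ∃ j, i₁ < j ∧ j < i₂ ∧ c j = 0) ∧
  n = c.sum (fun i a => a * Nat.fib (2 * i))

/-- `n` has `F (2k)` as the smallest summand of its Zeckendorf decomposition. -/
def ZeckMin (k n : ℕ) : Prop :=
  ∃ s : Finset ℕ, IsZeck n s ∧ 2 * k ∈ s ∧ ∀ i ∈ s, 2 * k ≤ i

/-- `n` has `F (2k)` or `2 F (2k)` as the smallest summand of its
Chung–Graham decomposition. -/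
def CGMin (k n : ℕ) : Prop :=
  ∃ c : ℕ →₀ ℕ, IsCG n c ∧ 1 ≤ c k ∧ ∀ i < k, c i = 0

open Nat (fib fib_add_two)

theorem gs_add_three (m : ℕ) : gs (m + 3) = gs (m + 2) ++ gs (m + 1) := rfl

theorem length_gs : ∀ m, (gs (m + 1)).length = fib (m + 2)
  | 0 => rfl
  | 1 => rfl
  | m + 2 => by
      rw [gs_add_three, List.length_append, length_gs (m + 1), length_gs m, add_comm]
      exact fib_add_two.symm

theorem gs_prefix_gs_succ : ∀ m, gs (m + 1) <+: gs (m + 2)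
  | 0 => ⟨[false], rfl⟩
  | _ + 1 => List.prefix_append _ _

theorem gs_prefix_gs {m m' : ℕ} (h : m ≤ m') : gs (m + 1) <+: gs (m' + 1) := by
  induction h with
  | refl => exact List.prefix_refl _
  | step _ ih => exact ih.trans (gs_prefix_gs_succ _)

theorem List.IsPrefix.getD_eq {α : Type*} {l L : List α} (h : l <+: L) {k : ℕ}
    (hk : k < l.length) (d : α) : L.getD k d = l.getD k d := by
  obtain ⟨r, rfl⟩ := h
  exact List.getD_append _ _ _ _ hk

theorem goldenLetter_succ_eq_getD {j m : ℕ} (hj : j < fib (m + 2)) :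
    goldenLetter (j + 1) = (gs (m + 1)).getD j true := by
  change (gs (j + 2)).getD j true = _
  rcases le_total (j + 1) m with h | h
  · have hfib : j + 3 ≤ fib (j + 3) + 1 := Nat.le_fib_add_one _
    refine ((gs_prefix_gs h).getD_eq ?_ true).symm
    rw [length_gs]
    exact (by omega : j < fib (j + 3))
  · exact (gs_prefix_gs h).getD_eq (by rwa [length_gs]) true

theorem gs_append_swap : ∀ m, ∃ t a b, gs (m + 2) ++ gs (m + 1) = t ++ [a, b] ∧
    gs (m + 1) ++ gs (m + 2) = t ++ [b, a]
  | 0 => ⟨[true], false, true, rfl, rfl⟩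
  | m + 1 => by
      obtain ⟨t, a, b, h₁, h₂⟩ := gs_append_swap m
      refine ⟨gs (m + 2) ++ t, b, a, ?_, ?_⟩
      · rw [gs_add_three, List.append_assoc, h₂, List.append_assoc]
      · rw [gs_add_three, h₁, List.append_assoc]

theorem gs_getD_two_fib_add {m j : ℕ} (hj : j + 2 < fib (m + 4)) :
    (gs (m + 6)).getD (2 * fib (m + 5) + j) true = (gs (m + 3)).getD j true := by
  obtain ⟨t, a, b, h₁, h₂⟩ := gs_append_swap m
  have hdecomp : gs (m + 6) = (gs (m + 5) ++ gs (m + 2)) ++ (gs (m + 1) ++ gs (m + 2)) := by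
    simp only [gs_add_three, List.append_assoc]
  have hlen : (gs (m + 5) ++ gs (m + 2)).length = 2 * fib (m + 5) := by
    have : (gs (m + 5)).length = fib (m + 6) := length_gs _
    have : (gs (m + 2)).length = fib (m + 3) := length_gs _
    have : fib (m + 6) = fib (m + 4) + fib (m + 5) := fib_add_two
    have : fib (m + 5) = fib (m + 3) + fib (m + 4) := fib_add_two
    rw [List.length_append]
    omega
  have ht : t.length + 2 = fib (m + 4) := by
    have : (gs (m + 3)).length = fib (m + 4) := length_gs _
    rw [gs_add_three, h₁, List.length_append] at this
    simpa using this
  have hj' : j < t.length := by omega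
  calc (gs (m + 6)).getD (2 * fib (m + 5) + j) true
      = (t ++ [b, a]).getD j true := by
        rw [hdecomp, List.getD_append_right _ _ _ _ (by omega), hlen, Nat.add_sub_cancel_left, h₂]
    _ = (t ++ [a, b]).getD j true := by
        rw [List.getD_append _ _ _ _ hj', List.getD_append _ _ _ _ hj']
    _ = (gs (m + 3)).getD j true := by rw [gs_add_three, h₁]

theorem golden_shift_two_fib (n : ℕ) (hn : 4 ≤ n) :
    ∀ i : ℕ, 1 ≤ i → i ≤ Nat.fib n - 2 →
      goldenLetter (2 * Nat.fib (n + 1) + i) = goldenLetter i := by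
  obtain ⟨m, rfl⟩ := Nat.exists_eq_add_of_le' hn
  intro i hi hin
  obtain ⟨j, rfl⟩ := Nat.exists_eq_add_of_le' hi
  change goldenLetter (2 * fib (m + 5) + (j + 1)) = _
  have : fib (m + 6) = fib (m + 4) + fib (m + 5) := fib_add_two
  have : fib (m + 7) = fib (m + 5) + fib (m + 6) := fib_add_two
  rw [← add_assoc, goldenLetter_succ_eq_getD (m := m + 5) (show _ < fib (m + 7) by omega),
    goldenLetter_succ_eq_getD (m := m + 2) (show _ < fib (m + 4) by omega)]
  exact gs_getD_two_fib_add (by omega)
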